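/- arXiv:2007.11964 — 8 statements merged into one kernel-verified Lean document; each statement's English description precedes it below -/
import Mathlib

section
/- Let H_class be a traceless diagonal Hamiltonian on n−1 qubits with lowest eigenvalue E₀ < 0, and H = X₀ ⊗ (E₀·I − H_class). Then H admits a decomposition H = Σᵢ X₀ ⊗ (αᵢ I − D̃ᵢ) into (m+1)-local stoquastic terms (each term X₀ ⊗ (αᵢI − D̃ᵢ) with D̃ᵢ diagonal, m-local, and αᵢ ≤ min-eigenvalue of D̃ᵢ, with Σᵢαᵢ = E₀ and ΣᵢD̃ᵢ = H_class) if and only if there exists a frustration-free m-local decomposition of H_class, i.e., a decomposition H_class = Σᵢ Dᵢ with each Dᵢ diagonal and acting on at most m qubits, such that E₀ = Σᵢ E_g(Dᵢ), where E_g(Dᵢ) denotes the minimum diagonal entry of Dᵢ. -/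
/-- `f` depends only on the bits in `S`. -/
def DepOn {n : ℕ} (S : Finset (Fin n)) (f : (Fin n → Bool) → ℝ) : Prop :=
  ∀ x y, (∀ i ∈ S, x i = y i) → f x = f y

/-- Minimum diagonal entry of a diagonal Hamiltonian. -/
noncomputable def Emin {n : ℕ} (f : (Fin n → Bool) → ℝ) : ℝ :=
  Finset.univ.inf' Finset.univ_nonempty f

/-- For traceless diagonal `Hc` with lowest eigenvalue `E₀ < 0` and
`H = X₀ ⊗ (E₀·I − Hc)`: `H` admits a decomposition `Σᵢ X₀ ⊗ (αᵢ I − D̃ᵢ)` into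
`(m+1)`-local stoquastic terms (each `D̃ᵢ` diagonal and `m`-local, `αᵢ ≤ Emin D̃ᵢ`,
`Σαᵢ = E₀`, `ΣD̃ᵢ = Hc`) iff `Hc` admits a frustration-free `m`-local decomposition. -/
theorem termwise_decomposition_iff_frustration_free {n m : ℕ}
    (Hc : (Fin n → Bool) → ℝ) (htr : ∑ x, Hc x = 0) (hneg : Emin Hc < 0) :
    (∃ (ι : Type) (T : Finset ι) (α : ι → ℝ) (D : ι → (Fin n → Bool) → ℝ),
      (∀ i ∈ T, ∃ S : Finset (Fin n), S.card ≤ m ∧ DepOn S (D i)) ∧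
      (∀ i ∈ T, α i ≤ Emin (D i)) ∧
      (∑ i ∈ T, α i) = Emin Hc ∧
      (∀ x, ∑ i ∈ T, D i x = Hc x)) ↔
    (∃ (ι : Type) (T : Finset ι) (D : ι → (Fin n → Bool) → ℝ),
      (∀ i ∈ T, ∃ S : Finset (Fin n), S.card ≤ m ∧ DepOn S (D i)) ∧
      (∀ x, ∑ i ∈ T, D i x = Hc x) ∧
      Emin Hc = ∑ i ∈ T, Emin (D i)) := by
  constructor
  · rintro ⟨ι, T, α, D, hloc, hle, hsum, hdec⟩
    refine ⟨ι, T, D, hloc, hdec, le_antisymm ?_ ?_⟩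
    · calc Emin Hc = ∑ i ∈ T, α i := hsum.symm
        _ ≤ ∑ i ∈ T, Emin (D i) := Finset.sum_le_sum hle
    · obtain ⟨x₀, -, hx₀⟩ := Finset.exists_mem_eq_inf' (Finset.univ_nonempty) Hc
      calc ∑ i ∈ T, Emin (D i) ≤ ∑ i ∈ T, D i x₀ :=
            Finset.sum_le_sum fun i _ => Finset.inf'_le _ (Finset.mem_univ x₀)
        _ = Hc x₀ := hdec x₀
        _ = Emin Hc := hx₀.symm
  · rintro ⟨ι, T, D, hloc, hdec, hsum⟩
    exact ⟨ι, T, fun i => Emin (D i), D, hloc, fun i _ => le_rfl, hsum.symm, hdec⟩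
end

section
/- For the Hamiltonian H = X₀ ⊗ (E₀ − H_Ising) where H_Ising = Σ_{(i,j)∈E} J_{ij} Z_i Z_j with couplings J_{ij} ∈ {−1,+1} on a graph G with n−1 vertices, and E₀ its ground energy: if H_Ising is frustrated (E₀ > −|E|), then H cannot be written as a sum of 3-local stoquastic terms of the form X₀ ⊗ D_{ij} with D_{ij} = α_{ij}^I I + α_{ij}^{IZ} Z_j + α_{ij}^{ZI} Z_i + J_{ij} Z_i Z_j satisfying ⟨x|D_{ij}|x⟩ ≤ 0 for all x and Σ α_{ij}^I = E₀ (together with the consistency conditions that the Z_i and Z_j coefficients sum appropriately to reproduce H). -/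
/-- Spin value of a bit. -/
def sgn (b : Bool) : ℝ := if b then 1 else -1

/-- If the Ising Hamiltonian `H_Ising = Σ_{(i,j)∈E} J_{ij} Z_i Z_j` with `J_{ij} = ±1`
is frustrated (`E₀ > -|E|`), then `H = X₀ ⊗ (E₀ − H_Ising)` admits no decomposition
into 3-local stoquastic terms `X₀ ⊗ D_{ij}` with
`D_{ij} = α_{ij}^I + α_{ij}^{IZ} Z_j + α_{ij}^{ZI} Z_i + J_{ij} Z_i Z_j`,
each with nonpositive diagonal, summing correctly to `H`. -/
theorem frustrated_ising_not_termwise_stoquastic {n : ℕ}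
    (E : Finset (Fin n × Fin n)) (J : Fin n × Fin n → ℝ)
    (hJ : ∀ e ∈ E, J e = 1 ∨ J e = -1)
    (hloop : ∀ e ∈ E, e.1 ≠ e.2)
    (E0 : ℝ)
    (hE0 : E0 = Finset.univ.inf' Finset.univ_nonempty
      (fun s : Fin n → Bool => ∑ e ∈ E, J e * sgn (s e.1) * sgn (s e.2)))
    (hfrust : -(E.card : ℝ) < E0) :
    ¬ ∃ (αI αIZ αZI : Fin n × Fin n → ℝ),
      (∀ e ∈ E, ∀ si sj : ℝ, (si = 1 ∨ si = -1) → (sj = 1 ∨ sj = -1) →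
        αI e + αIZ e * sj + αZI e * si + J e * si * sj ≤ 0) ∧
      (∑ e ∈ E, αI e) = E0 ∧
      (∀ j, ∑ e ∈ E.filter (fun e => e.2 = j), αIZ e = 0) ∧
      (∀ i, ∑ e ∈ E.filter (fun e => e.1 = i), αZI e = 0) := by
  rintro ⟨αI, αIZ, αZI, hneg, hsum, -, -⟩
  have key : ∀ e ∈ E, αI e ≤ -1 := by
    intro e he
    rcases hJ e he with hJe | hJe
    · have h1 := hneg e he 1 1 (Or.inl rfl) (Or.inl rfl)
      have h2 := hneg e he (-1) (-1) (Or.inr rfl) (Or.inr rfl)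
      rw [hJe] at h1 h2; linarith
    · have h1 := hneg e he 1 (-1) (Or.inl rfl) (Or.inr rfl)
      have h2 := hneg e he (-1) 1 (Or.inr rfl) (Or.inl rfl)
      rw [hJe] at h1 h2; linarith
  have hle : (∑ e ∈ E, αI e) ≤ ∑ e ∈ E, (-1 : ℝ) := Finset.sum_le_sum key
  rw [Finset.sum_const, nsmul_eq_mul] at hle
  rw [hsum] at hle
  linarith
end

section
/- Reduction from Planar Spin Glass to non-global-stoquasticity: given a graph G = (V,E) with |V| = n, integer K, and 0 < ε < 1, define the (n+1)-qubit Hamiltonian H = (K+ε) X_{n+1} − Σ_{(i,j)∈E} Z_iZ_jX_{n+1} − Σ_{i∈V} Z_iX_{n+1}. Then H is globally stoquastic (all off-diagonal entries ≤ 0 in the computational basis) if and only if for all spin assignments S ∈ {±1}^n, Σ_{(i,j)∈E} S_iS_j + Σᵢ Sᵢ ≥ K + ε. In particular, since the left side is always an integer, H is globally stoquastic iff min_S (Σ_{(i,j)∈E} S_iS_j + Σᵢ Sᵢ) ≥ K + 1. -/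
lemma sgn_int (b : Bool) : sgn b = ((if b then 1 else -1 : ℤ) : ℝ) := by
  cases b <;> simp [sgn]

/-- Reduction from Planar Spin Glass: the Hamiltonian
`H = (K+ε) X_{n+1} − Σ_{(i,j)∈E} Z_iZ_jX_{n+1} − Σ_i Z_iX_{n+1}` is globally
stoquastic iff every spin configuration has energy `≥ K + ε`, equivalently `≥ K + 1`. -/
theorem planar_spin_glass_reduction {n : ℕ}
    (E : Finset (Fin n × Fin n)) (K : ℤ) (ε : ℝ) (hε : 0 < ε ∧ ε < 1)
    (H : (Fin n → Bool) × Bool → (Fin n → Bool) × Bool → ℝ)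
    (hH : ∀ x b y b', H (x, b) (y, b') =
      if x = y ∧ b ≠ b' then
        ((K : ℝ) + ε) - (∑ e ∈ E, sgn (x e.1) * sgn (x e.2)) - ∑ i, sgn (x i)
      else 0) :
    ((∀ p q, p ≠ q → H p q ≤ 0) ↔
      ∀ s : Fin n → Bool,
        (K : ℝ) + ε ≤ (∑ e ∈ E, sgn (s e.1) * sgn (s e.2)) + ∑ i, sgn (s i)) ∧
    ((∀ p q, p ≠ q → H p q ≤ 0) ↔
      ∀ s : Fin n → Bool,
        (K : ℝ) + 1 ≤ (∑ e ∈ E, sgn (s e.1) * sgn (s e.2)) + ∑ i, sgn (s i)) := by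
  obtain ⟨hε0, hε1⟩ := hε
  -- the energy is an integer
  have hint : ∀ s : Fin n → Bool, ∃ m : ℤ,
      (∑ e ∈ E, sgn (s e.1) * sgn (s e.2)) + ∑ i, sgn (s i) = (m : ℝ) := by
    intro s
    refine ⟨(∑ e ∈ E, (if s e.1 then 1 else -1 : ℤ) * (if s e.2 then 1 else -1)) +
        ∑ i, (if s i then 1 else -1 : ℤ), ?_⟩
    push_cast
    simp [sgn_int]
  have h1 : (∀ p q, p ≠ q → H p q ≤ 0) ↔
      ∀ s : Fin n → Bool,
        (K : ℝ) + ε ≤ (∑ e ∈ E, sgn (s e.1) * sgn (s e.2)) + ∑ i, sgn (s i) := by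
    constructor
    · intro h s
      have := h (s, true) (s, false) (by simp)
      rw [hH] at this
      simp only [ne_eq, Bool.true_eq_false, not_false_eq_true, and_self, if_pos,
        and_true, if_true] at this
      simp at this
      linarith
    · intro h p q hpq
      obtain ⟨x, b⟩ := p; obtain ⟨y, b'⟩ := q
      rw [hH]
      split_ifs with hc
      · obtain ⟨rfl, hbb⟩ := hc
        have := h x
        linarith
      · exact le_refl 0
  have hequiv : (∀ s : Fin n → Bool,
        (K : ℝ) + ε ≤ (∑ e ∈ E, sgn (s e.1) * sgn (s e.2)) + ∑ i, sgn (s i)) ↔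
      (∀ s : Fin n → Bool,
        (K : ℝ) + 1 ≤ (∑ e ∈ E, sgn (s e.1) * sgn (s e.2)) + ∑ i, sgn (s i)) := by
    constructor
    · intro h s
      obtain ⟨m, hm⟩ := hint s
      have := h s
      rw [hm] at this ⊢
      have hKm : K < m := by exact_mod_cast (by linarith : (K : ℝ) < m)
      exact_mod_cast (by exact_mod_cast hKm : K + 1 ≤ m)
    · intro h s
      have := h s
      linarith
  exact ⟨h1, h1.trans hequiv⟩
end

section
/- MAX-2-SAT clause gadget: for Boolean variables a, b, c, d, consider the 10 clauses (a), (b), (c), (d), (¬a ∨ ¬b), (¬a ∨ ¬c), (¬b ∨ ¬c), (a ∨ ¬d), (b ∨ ¬d), (c ∨ ¬d). If a ∨ b ∨ c is true, then there is a choice of d such that exactly 7 of the 10 clauses are satisfied, and no choice of d satisfies more than 7. If a ∨ b ∨ c is false, then for every choice of d at most 6 of the 10 clauses are satisfied. -/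
/-- Number of satisfied clauses among the 10 gadget clauses
`(a), (b), (c), (d), (¬a∨¬b), (¬a∨¬c), (¬b∨¬c), (a∨¬d), (b∨¬d), (c∨¬d)`. -/
def gadgetCount (a b c d : Bool) : ℕ :=
  (if a then 1 else 0) + (if b then 1 else 0) + (if c then 1 else 0) + (if d then 1 else 0) +
  (if !a || !b then 1 else 0) + (if !a || !c then 1 else 0) + (if !b || !c then 1 else 0) +
  (if a || !d then 1 else 0) + (if b || !d then 1 else 0) + (if c || !d then 1 else 0)

/-- MAX-2-SAT clause gadget: if `a ∨ b ∨ c` is true then some choice of `d` satisfies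
exactly 7 of the 10 clauses and no choice satisfies more than 7; if `a ∨ b ∨ c` is
false then every choice of `d` satisfies at most 6. -/
theorem clause_gadget (a b c : Bool) :
    ((a || b || c) = true →
      (∃ d, gadgetCount a b c d = 7) ∧ (∀ d, gadgetCount a b c d ≤ 7)) ∧
    ((a || b || c) = false → ∀ d, gadgetCount a b c d ≤ 6) := by
  constructor
  · intro h
    constructor
    · cases a <;> cases b <;> cases c <;> simp_all <;> decide
    · intro d; cases a <;> cases b <;> cases c <;> cases d <;> simp_all [gadgetCount]
  · intro h d; cases a <;> cases b <;> cases c <;> cases d <;> simp_all [gadgetCount]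
end

section
/- Via the clause gadget, ∀∃-3-SAT reduces to MINMAX-2-SAT: for every 3-CNF formula 𝒞(x,y) with m clauses there is a 2-CNF formula 𝒞'(x,y,z) with 10m clauses and m extra variables z such that: (∀x ∃y, 𝒞(x,y) is true) if and only if (∀x ∃y∃z, at least 7m clauses of 𝒞' are satisfied by (x,y,z)). -/
/-- A literal: a variable together with a polarity. -/
abbrev Lit (V : Type) := V × Bool

/-- Evaluate a literal under an assignment. -/
def evalLit {V : Type} (σ : V → Bool) (l : Lit V) : Bool :=
  if l.2 then σ l.1 else !(σ l.1)

/-- A 3-clause is satisfied when one of its literals is true. -/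
def sat3 {V : Type} (σ : V → Bool) (c : Lit V × Lit V × Lit V) : Bool :=
  evalLit σ c.1 || evalLit σ c.2.1 || evalLit σ c.2.2

/-- A 2-clause is satisfied when one of its literals is true. -/
def sat2 {V : Type} (σ : V → Bool) (c : Lit V × Lit V) : Bool :=
  evalLit σ c.1 || evalLit σ c.2

namespace SatGadget

/-- Lift a literal to a larger variable set. -/
def lift {V W : Type} (l : Lit V) : Lit (V ⊕ W) := (Sum.inl l.1, l.2)

/-- Negate a literal. -/
def neg {V : Type} (l : Lit V) : Lit V := (l.1, !l.2)

lemma evalLit_lift {V W : Type} (σ : V → Bool) (τ : W → Bool) (l : Lit V) :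
    evalLit (Sum.elim σ τ) (lift l) = evalLit σ l := rfl

lemma evalLit_neg {V : Type} (σ : V → Bool) (l : Lit V) :
    evalLit σ (neg l) = !(evalLit σ l) := by
  obtain ⟨v, b⟩ := l; cases b <;> simp [evalLit, neg]

/-- The 10 gadget clauses for a 3-clause `(a, b, c)` with fresh variable literal `d`. -/
def gadget {V : Type} (a b c d : Lit V) : Fin 10 → Lit V × Lit V :=
  ![(a, a), (b, b), (c, c), (d, d), (neg a, neg b), (neg a, neg c), (neg b, neg c),
    (a, neg d), (b, neg d), (c, neg d)]

/-- Number of satisfied gadget clauses given the values of the three literals and `d`. -/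
def cnt (A B C D : Bool) : ℕ :=
  (if A then 1 else 0) + (if B then 1 else 0) + (if C then 1 else 0) + (if D then 1 else 0)
  + (if (!A || !B) then 1 else 0) + (if (!A || !C) then 1 else 0) + (if (!B || !C) then 1 else 0)
  + (if (A || !D) then 1 else 0) + (if (B || !D) then 1 else 0) + (if (C || !D) then 1 else 0)

lemma sum_gadget {V : Type} (σ : V → Bool) (a b c d : Lit V) :
    (∑ j : Fin 10, if sat2 σ (gadget a b c d j) = true then 1 else 0) =
      cnt (evalLit σ a) (evalLit σ b) (evalLit σ c) (evalLit σ d) := by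
  cases hA : evalLit σ a <;> cases hB : evalLit σ b <;> cases hC : evalLit σ c <;>
    cases hD : evalLit σ d <;>
  simp only [Fin.sum_univ_succ, Fin.sum_univ_zero, gadget, Matrix.cons_val_zero,
    Matrix.cons_val_succ, sat2, cnt, evalLit_neg, hA, hB, hC, hD] <;> decide

lemma cnt_le_seven : ∀ A B C D : Bool, cnt A B C D ≤ 7 := by decide

lemma cnt_le_six : ∀ A B C D : Bool, (A || B || C) = false → cnt A B C D ≤ 6 := by decide

lemma cnt_eq_seven : ∀ A B C : Bool, (A || B || C) = true → cnt A B C (A && B && C) = 7 := by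
  decide

end SatGadget

open SatGadget in
/-- ∀∃-3-SAT reduces to MINMAX-2-SAT: for every 3-CNF formula `C` with `m` clauses over
variables `x ∈ Bool^n`, `y ∈ Bool^l`, there is a 2-CNF formula `C'` with `10m` clauses
and `m` extra variables `z` such that `(∀x ∃y, C(x,y))` holds iff
`(∀x ∃y ∃z, at least 7m clauses of C' are satisfied)`. -/
theorem forall_exists_3sat_to_minmax_2sat (n l m : ℕ)
    (C : Fin m → Lit (Fin n ⊕ Fin l) × Lit (Fin n ⊕ Fin l) × Lit (Fin n ⊕ Fin l)) :
    ∃ C' : Fin m × Fin 10 →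
        Lit ((Fin n ⊕ Fin l) ⊕ Fin m) × Lit ((Fin n ⊕ Fin l) ⊕ Fin m),
      ((∀ x : Fin n → Bool, ∃ y : Fin l → Bool,
          ∀ k, sat3 (Sum.elim x y) (C k) = true) ↔
       (∀ x : Fin n → Bool, ∃ (y : Fin l → Bool) (z : Fin m → Bool),
          7 * m ≤ (Finset.univ.filter
            (fun kj : Fin m × Fin 10 =>
              sat2 (Sum.elim (Sum.elim x y) z) (C' kj) = true)).card)) := by
  classical
  set G : Fin m × Fin 10 → Lit ((Fin n ⊕ Fin l) ⊕ Fin m) × Lit ((Fin n ⊕ Fin l) ⊕ Fin m) :=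
    fun kj => gadget (lift (C kj.1).1) (lift (C kj.1).2.1) (lift (C kj.1).2.2)
      (Sum.inr kj.1, true) kj.2 with hG
  refine ⟨G, ?_⟩
  have key : ∀ (x : Fin n → Bool) (y : Fin l → Bool) (z : Fin m → Bool),
      (Finset.univ.filter (fun kj : Fin m × Fin 10 =>
          sat2 (Sum.elim (Sum.elim x y) z) (G kj) = true)).card =
        ∑ k : Fin m, cnt (evalLit (Sum.elim x y) (C k).1)
          (evalLit (Sum.elim x y) (C k).2.1) (evalLit (Sum.elim x y) (C k).2.2) (z k) := by
    intro x y z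
    rw [Finset.card_filter, Fintype.sum_prod_type]
    refine Finset.sum_congr rfl fun k _ => ?_
    have : evalLit (Sum.elim (Sum.elim x y) z) ((Sum.inr k : (Fin n ⊕ Fin l) ⊕ Fin m), true)
        = z k := rfl
    show (∑ j : Fin 10, if sat2 (Sum.elim (Sum.elim x y) z)
        (gadget (lift (C k).1) (lift (C k).2.1) (lift (C k).2.2) (Sum.inr k, true) j) = true
        then 1 else 0) = _
    rw [sum_gadget]
    rw [this, evalLit_lift, evalLit_lift, evalLit_lift]
  constructor
  · intro h x
    obtain ⟨y, hy⟩ := h x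
    refine ⟨y, fun k => evalLit (Sum.elim x y) (C k).1 && evalLit (Sum.elim x y) (C k).2.1
      && evalLit (Sum.elim x y) (C k).2.2, ?_⟩
    rw [key]
    have : ∀ k : Fin m, cnt (evalLit (Sum.elim x y) (C k).1)
        (evalLit (Sum.elim x y) (C k).2.1) (evalLit (Sum.elim x y) (C k).2.2)
        (evalLit (Sum.elim x y) (C k).1 && evalLit (Sum.elim x y) (C k).2.1
          && evalLit (Sum.elim x y) (C k).2.2) = 7 := by
      intro k
      exact cnt_eq_seven _ _ _ (hy k)
    simp [this, Finset.sum_const, mul_comm]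
  · intro h x
    obtain ⟨y, z, hcard⟩ := h x
    refine ⟨y, fun k => ?_⟩
    by_contra hk
    rw [Bool.not_eq_true] at hk
    rw [key] at hcard
    have hlt : (∑ k : Fin m, cnt (evalLit (Sum.elim x y) (C k).1)
        (evalLit (Sum.elim x y) (C k).2.1) (evalLit (Sum.elim x y) (C k).2.2) (z k))
        < ∑ _k : Fin m, 7 := by
      refine Finset.sum_lt_sum (fun i _ => cnt_le_seven _ _ _ _) ⟨k, Finset.mem_univ k, ?_⟩
      have := cnt_le_six (evalLit (Sum.elim x y) (C k).1) (evalLit (Sum.elim x y) (C k).2.1)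
        (evalLit (Sum.elim x y) (C k).2.2) (z k) hk
      omega
    simp only [Finset.sum_const, Finset.card_univ, Fintype.card_fin, smul_eq_mul] at hlt
    omega
end

section
/- SAT-Hamiltonian diagonal entries count violated clauses: for a 2-CNF formula 𝒞 over variables x ∈ {0,1}^n (encoded via X/Z operators) and y ∈ {0,1}^l (encoded via projectors), with associated Hamiltonian H_𝒞 = Σ_k P(c_{k,1}) ⊗ P(c_{k,2}) where P(aᵢ) = Xᵢ + I, P(¬aᵢ) = Zᵢ + I, P(bⱼ) = |0⟩⟨0|_{n+j}, P(¬bⱼ) = |1⟩⟨1|_{n+j}, and H_𝒞(x) := W(x0^l) H_𝒞 W(x0^l)† with W(x0^l) applying a Hadamard to qubit i ∈ [n] iff xᵢ = 1: the diagonal entry ⟨1^n y| H_𝒞(x) |1^n y⟩ equals the number of clauses of 𝒞 violated by assignment (x, y). -/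
open Finset

namespace Stmt15

/-- A literal of the 2-SAT formula: either an x-variable literal `aᵢ`/`¬aᵢ`
(`Sum.inl (i, pol)`) or a y-variable literal `bⱼ`/`¬bⱼ` (`Sum.inr (j, pol)`). -/
abbrev XLit (n l : ℕ) := (Fin n × Bool) ⊕ (Fin l × Bool)

/-- The qubit on which a literal's operator acts. -/
def suppQ {n l : ℕ} : XLit n l → Fin n ⊕ Fin l
  | .inl (i, _) => .inl i
  | .inr (j, _) => .inr j

/-- The bit of a basis state at a given qubit. -/
def bit {n l : ℕ} (u : (Fin n → Bool) × (Fin l → Bool)) : Fin n ⊕ Fin l → Bool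
  | .inl i => u.1 i
  | .inr j => u.2 j

/-- Entry of the single-qubit factor of `P(c)` after conjugating qubit `i ∈ [n]` by a
Hadamard iff `xpat i = true`; here `P(aᵢ) = X+I`, `P(¬aᵢ) = Z+I`, `P(bⱼ) = |0⟩⟨0|`,
`P(¬bⱼ) = |1⟩⟨1|`, and `W(X+I)W = Z+I`. -/
def conjEntry {n l : ℕ} (xpat : Fin n → Bool) (c : XLit n l) (s t : Bool) : ℝ :=
  match c with
  | .inl (i, pol) =>
      if (if pol then xpat i else !(xpat i)) then
        (if s = t ∧ s = false then 2 else 0)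
      else 1
  | .inr (_, pol) => if s = t ∧ s = (!pol) then 1 else 0

/-- Entry of the conjugated clause term `W(x0^l) P(c₁) ⊗ P(c₂) W(x0^l)†`. -/
def termEntry {n l : ℕ} (xpat : Fin n → Bool) (c₁ c₂ : XLit n l)
    (u v : (Fin n → Bool) × (Fin l → Bool)) : ℝ :=
  conjEntry xpat c₁ (bit u (suppQ c₁)) (bit v (suppQ c₁)) *
  conjEntry xpat c₂ (bit u (suppQ c₂)) (bit v (suppQ c₂)) *
  (if ∀ q, q ≠ suppQ c₁ → q ≠ suppQ c₂ → bit u q = bit v q then 1 else 0)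

/-- Entry of `H_𝒞(x) = W(x0^l) H_𝒞 W(x0^l)†` for the formula `𝒞` with clauses `C k`. -/
def HC {n l m : ℕ} (xpat : Fin n → Bool) (C : Fin m → XLit n l × XLit n l)
    (u v : (Fin n → Bool) × (Fin l → Bool)) : ℝ :=
  ∑ k, termEntry xpat (C k).1 (C k).2 u v

/-- Truth value of a literal under the assignment `(x, y)`. -/
def evalXLit {n l : ℕ} (x : Fin n → Bool) (y : Fin l → Bool) : XLit n l → Bool
  | .inl (i, pol) => if pol then x i else !(x i)
  | .inr (j, pol) => if pol then y j else !(y j)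

lemma conjEntry_diag {n l : ℕ} (x : Fin n → Bool) (y : Fin l → Bool) (c : XLit n l) :
    conjEntry x c (bit ((fun _ => true), y) (suppQ c)) (bit ((fun _ => true), y) (suppQ c)) =
      if evalXLit x y c = true then 0 else 1 := by
  rcases c with ⟨i, pol⟩ | ⟨j, pol⟩
  · cases pol <;> cases h : x i <;> simp [conjEntry, evalXLit, suppQ, bit, h]
  · cases pol <;> cases h : y j <;> simp [conjEntry, evalXLit, suppQ, bit, h]

/-- The diagonal entry `⟨1ⁿ y|H_𝒞(x)|1ⁿ y⟩` equals the number of clauses of `𝒞`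
violated by the assignment `(x, y)`. -/
theorem sat_hamiltonian_diagonal_counts_violations {n l m : ℕ}
    (C : Fin m → XLit n l × XLit n l)
    (hdistinct : ∀ k, suppQ (C k).1 ≠ suppQ (C k).2) :
    ∀ (x : Fin n → Bool) (y : Fin l → Bool),
      HC x C ((fun _ => true), y) ((fun _ => true), y) =
        ((Finset.univ.filter fun k =>
          ¬(evalXLit x y (C k).1 = true ∨ evalXLit x y (C k).2 = true)).card : ℝ) := by
  intro x y
  rw [HC, Finset.card_filter, Nat.cast_sum]
  apply Finset.sum_congr rfl
  intro k _
  rw [termEntry, conjEntry_diag, conjEntry_diag, if_pos (fun q _ _ => rfl)]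
  by_cases h1 : evalXLit x y (C k).1 = true <;>
    by_cases h2 : evalXLit x y (C k).2 = true <;>
    simp [h1, h2]

end Stmt15
end

section
/- Clifford sign-curing of the disordered 1D XYZ chain: consider H = Σ_{i=1}^{n−1} α_i^{XX} X_iX_{i+1} + α_i^{YY} Y_iY_{i+1} + α_i^{ZZ} Z_iZ_{i+1} on an open chain. If for all even edges i, α_i^{XX} · α_i^{YY} · α_i^{ZZ} ≥ 0 (or alternatively, if this holds for all odd edges), then there exists an assignment of real Pauli-type operators (tensor products of X's on at most 4 consecutive qubits with signs, for the terms on the complementary edges, and tensor products of Z's for the terms on the hypothesis edges) preserving all pairwise commutation/anticommutation relations and all product relations of the original terms, such that every image term has all off-diagonal entries ≤ 0; hence the transformed Hamiltonian is 4-termwise stoquastic. -/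
open Finset
open scoped symmDiff

namespace Stmt18

abbrev Qubits (n : ℕ) := Fin (n + 1) → Bool

/-- Spin value of a bit. -/
def sgn (b : Bool) : ℝ := if b then 1 else -1

/-- `x` and `y` differ exactly on the two qubits of edge `i`. -/
def flipPair {n : ℕ} (i : Fin n) (x y : Qubits n) : Prop :=
  ∀ j, (x j ≠ y j) ↔ (j = i.castSucc ∨ j = i.succ)

instance {n : ℕ} (i : Fin n) (x y : Qubits n) : Decidable (flipPair i x y) :=
  inferInstanceAs (Decidable (∀ j, (x j ≠ y j) ↔ (j = i.castSucc ∨ j = i.succ)))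

/-- Matrix of `X_i X_{i+1}` (real). -/
def origXX {n : ℕ} (i : Fin n) : Matrix (Qubits n) (Qubits n) ℝ :=
  fun x y => if flipPair i x y then 1 else 0

/-- Matrix of `Y_i Y_{i+1}` (real). -/
def origYY {n : ℕ} (i : Fin n) : Matrix (Qubits n) (Qubits n) ℝ :=
  fun x y => if flipPair i x y then (if x i.castSucc = x i.succ then -1 else 1) else 0

/-- Matrix of `Z_i Z_{i+1}`. -/
def origZZ {n : ℕ} (i : Fin n) : Matrix (Qubits n) (Qubits n) ℝ :=
  fun x y => if x = y then sgn (x i.castSucc) * sgn (x i.succ) else 0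

/-- The three Pauli terms on edge `i` of the XYZ chain. -/
def term {n : ℕ} (i : Fin n) : Fin 3 → Matrix (Qubits n) (Qubits n) ℝ :=
  ![origXX i, origYY i, origZZ i]

/-- A signed tensor product of `Z`'s on the qubits of `S`. -/
def ZTensor {n : ℕ} (ε : ℝ) (S : Finset (Fin (n + 1))) : Matrix (Qubits n) (Qubits n) ℝ :=
  fun x y => if x = y then ε * ∏ i ∈ S, sgn (x i) else 0

/-- A signed tensor product of `X`'s on the qubits of `S`. -/
def XTensor {n : ℕ} (ε : ℝ) (S : Finset (Fin (n + 1))) : Matrix (Qubits n) (Qubits n) ℝ :=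
  fun x y => if (∀ j, (x j ≠ y j) ↔ j ∈ S) then ε else 0

section Aux
variable {n : ℕ}

def flip (T : Finset (Fin (n+1))) (x : Qubits n) : Qubits n :=
  fun j => if j ∈ T then !(x j) else x j

noncomputable def Pm (ε : ℝ) (T S : Finset (Fin (n+1))) : Matrix (Qubits n) (Qubits n) ℝ :=
  fun x y => if (∀ j, (x j ≠ y j) ↔ j ∈ T) then ε * ∏ i ∈ S, sgn (x i) else 0

noncomputable def chi (T S : Finset (Fin (n+1))) : ℝ :=
  ∏ i ∈ S, (if i ∈ T then (-1:ℝ) else 1)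

lemma sgn_ne_zero (b : Bool) : sgn b ≠ 0 := by cases b <;> simp [sgn]

lemma sgn_mul_self (b : Bool) : sgn b * sgn b = 1 := by cases b <;> simp [sgn]

lemma prodsgn_ne_zero (S : Finset (Fin (n+1))) (x : Qubits n) :
    ∏ i ∈ S, sgn (x i) ≠ 0 :=
  Finset.prod_ne_zero_iff.2 fun i _ => sgn_ne_zero _

lemma chi_mul_self (T S : Finset (Fin (n+1))) : chi T S * chi T S = 1 := by
  rw [chi, ← Finset.prod_mul_distrib]
  rw [show (∏ i ∈ S, ((if i ∈ T then (-1:ℝ) else 1) * (if i ∈ T then (-1:ℝ) else 1)))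
      = ∏ _i ∈ S, (1:ℝ) from Finset.prod_congr rfl (fun i _ => by split_ifs <;> norm_num)]
  exact Finset.prod_const_one

lemma chi_ne_zero (T S : Finset (Fin (n+1))) : chi T S ≠ 0 := by
  intro h
  have := chi_mul_self T S
  rw [h, mul_zero] at this
  norm_num at this

lemma flip_spec (T : Finset (Fin (n+1))) (x : Qubits n) :
    ∀ j, (x j ≠ flip T x j) ↔ j ∈ T := by
  intro j; by_cases h : j ∈ T <;> simp [flip, h]

lemma eq_flip_iff (T : Finset (Fin (n+1))) (x z : Qubits n) :
    (∀ j, (x j ≠ z j) ↔ j ∈ T) ↔ z = flip T x := by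
  constructor
  · intro h; funext j
    have hj := h j
    by_cases ht : j ∈ T <;> simp [flip, ht] at hj ⊢ <;>
      cases hx : x j <;> cases hz : z j <;> simp_all
  · rintro rfl; exact flip_spec T x

lemma prod_sgn_flip (T S : Finset (Fin (n+1))) (x : Qubits n) :
    ∏ i ∈ S, sgn (flip T x i) = chi T S * ∏ i ∈ S, sgn (x i) := by
  rw [chi, ← Finset.prod_mul_distrib]
  refine Finset.prod_congr rfl fun i _ => ?_
  by_cases h : i ∈ T <;> cases hx : x i <;> simp [flip, sgn, h, hx]

lemma prod_symmDiff_of_sq (f : Fin (n+1) → ℝ) (hf : ∀ i, f i * f i = 1)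
    (S S' : Finset (Fin (n+1))) :
    ∏ i ∈ S ∆ S', f i = (∏ i ∈ S, f i) * ∏ i ∈ S', f i := by
  have hS : ∏ i ∈ S, f i = (∏ i ∈ S \ S', f i) * ∏ i ∈ S ∩ S', f i := by
    rw [← Finset.prod_union (Finset.disjoint_sdiff_inter S S'), Finset.sdiff_union_inter]
  have hS' : ∏ i ∈ S', f i = (∏ i ∈ S' \ S, f i) * ∏ i ∈ S ∩ S', f i := by
    rw [Finset.inter_comm, ← Finset.prod_union (Finset.disjoint_sdiff_inter S' S),
      Finset.sdiff_union_inter]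
  have hsq : (∏ i ∈ S ∩ S', f i) * ∏ i ∈ S ∩ S', f i = 1 := by
    rw [← Finset.prod_mul_distrib, Finset.prod_congr rfl fun i _ => hf i]
    exact Finset.prod_const_one
  have hsymm : S ∆ S' = (S \ S') ∪ (S' \ S) := by
    rw [symmDiff_def, Finset.sup_eq_union]
  rw [hsymm, Finset.prod_union (disjoint_sdiff_sdiff), hS, hS']
  linear_combination (-(∏ i ∈ S \ S', f i) * (∏ i ∈ S' \ S, f i)) * hsq

lemma cond_flip_iff (T T' : Finset (Fin (n+1))) (x y : Qubits n) :
    (∀ j, (flip T x j ≠ y j) ↔ j ∈ T') ↔ (∀ j, (x j ≠ y j) ↔ j ∈ T ∆ T') := by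
  refine forall_congr' fun j => ?_
  by_cases hT : j ∈ T <;> by_cases hT' : j ∈ T' <;>
    cases hx : x j <;> cases hy : y j <;>
      simp [flip, hT, hT', Finset.mem_symmDiff, hx, hy]

lemma Pm_mul (ε ε' : ℝ) (T S T' S' : Finset (Fin (n+1))) :
    Pm (n := n) ε T S * Pm ε' T' S' = Pm (ε * ε' * chi T S') (T ∆ T') (S ∆ S') := by
  ext x y
  rw [Matrix.mul_apply]
  rw [Finset.sum_eq_single (flip T x)]
  · show Pm ε T S x (flip T x) * Pm ε' T' S' (flip T x) y = _
    rw [Pm, Pm, Pm, if_pos (flip_spec T x)]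
    rw [if_congr (cond_flip_iff T T' x y) rfl rfl]
    split_ifs with h
    · rw [prod_sgn_flip, prod_symmDiff_of_sq (fun i => sgn (x i)) (fun i => sgn_mul_self _)]
      ring
    · rw [mul_zero]
  · intro z _ hz
    show Pm ε T S x z * Pm ε' T' S' z y = 0
    rw [Pm, if_neg, zero_mul]
    intro hc
    exact hz ((eq_flip_iff T x z).1 hc)
  · intro h; exact absurd (Finset.mem_univ _) h

lemma Pm_neg (ε : ℝ) (T S : Finset (Fin (n+1))) : -Pm (n := n) ε T S = Pm (-ε) T S := by
  ext x y
  by_cases h : (∀ j, (x j ≠ y j) ↔ j ∈ T) <;>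
    simp [Pm, h, Matrix.neg_apply]

lemma Pm_inj {ε ε' : ℝ} {T S : Finset (Fin (n+1))}
    (h : Pm (n := n) ε T S = Pm ε' T S) : ε = ε' := by
  have h2 := congrFun (congrFun h (fun _ => false)) (flip T (fun _ => false))
  rw [Pm, Pm, if_pos (flip_spec T _), if_pos (flip_spec T _)] at h2
  exact mul_right_cancel₀ (prodsgn_ne_zero S _) h2

end Aux
section Aux2
variable {n : ℕ}

lemma commute_of_chi {ε ε' : ℝ} {T S T' S' : Finset (Fin (n+1))}
    (h : chi T S' = chi T' S) :
    Pm (n := n) ε T S * Pm ε' T' S' = Pm ε' T' S' * Pm ε T S := by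
  rw [Pm_mul, Pm_mul, symmDiff_comm T' T, symmDiff_comm S' S, h]
  congr 1
  ring

lemma anticommute_of_chi {ε ε' : ℝ} {T S T' S' : Finset (Fin (n+1))}
    (h : chi T S' = -chi T' S) :
    Pm (n := n) ε T S * Pm ε' T' S' = -(Pm ε' T' S' * Pm ε T S) := by
  rw [Pm_mul, Pm_mul, Pm_neg, symmDiff_comm T' T, symmDiff_comm S' S, h]
  congr 1
  ring

lemma not_anticommute {ε ε' : ℝ} {T S T' S' : Finset (Fin (n+1))}
    (h : chi T S' = chi T' S) (hε : ε ≠ 0) (hε' : ε' ≠ 0) :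
    ¬ (Pm (n := n) ε T S * Pm ε' T' S' = -(Pm ε' T' S' * Pm ε T S)) := by
  intro hc
  rw [Pm_mul, Pm_mul, Pm_neg, symmDiff_comm T' T, symmDiff_comm S' S, h] at hc
  have h2 := Pm_inj hc
  have h3 : ε * ε' * chi T' S = 0 := by linarith
  exact (mul_ne_zero (mul_ne_zero hε hε') (chi_ne_zero T' S)) h3

lemma not_commute {ε ε' : ℝ} {T S T' S' : Finset (Fin (n+1))}
    (h : chi T S' = -chi T' S) (hε : ε ≠ 0) (hε' : ε' ≠ 0) :
    ¬ (Pm (n := n) ε T S * Pm ε' T' S' = Pm ε' T' S' * Pm ε T S) := by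
  intro hc
  rw [Pm_mul, Pm_mul, symmDiff_comm T' T, symmDiff_comm S' S, h] at hc
  have h2 := Pm_inj hc
  have h3 : ε * ε' * chi T' S = 0 := by linarith
  exact (mul_ne_zero (mul_ne_zero hε hε') (chi_ne_zero T' S)) h3

-- identification of given matrices with Pm normal form

lemma castSucc_ne_succ (i : Fin n) : i.castSucc ≠ i.succ := by
  simp [Fin.ext_iff]

lemma origXX_eq (i : Fin n) : origXX i = Pm 1 {i.castSucc, i.succ} ∅ := by
  ext x y
  rw [origXX, Pm, Finset.prod_empty, mul_one]
  refine if_congr (forall_congr' fun j => ?_) rfl rfl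
  simp [flipPair, Finset.mem_insert, Finset.mem_singleton]

lemma origYY_eq (i : Fin n) :
    origYY i = Pm (-1) {i.castSucc, i.succ} {i.castSucc, i.succ} := by
  ext x y
  rw [origYY, Pm, Finset.prod_pair (castSucc_ne_succ i)]
  rw [if_congr (show flipPair i x y ↔
      (∀ j, (x j ≠ y j) ↔ j ∈ ({i.castSucc, i.succ} : Finset (Fin (n+1)))) from
    forall_congr' fun j => by simp [Finset.mem_insert, Finset.mem_singleton]) rfl rfl]
  refine if_congr Iff.rfl ?_ rfl
  cases hx : x i.castSucc <;> cases hy : x i.succ <;> simp [sgn, hx, hy]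

lemma origZZ_eq (i : Fin n) : origZZ i = Pm 1 ∅ {i.castSucc, i.succ} := by
  ext x y
  rw [origZZ, Pm, Finset.prod_pair (castSucc_ne_succ i), one_mul]
  refine if_congr ?_ rfl rfl
  constructor
  · rintro rfl; simp
  · intro h; funext j
    have := h j
    simp only [Finset.notMem_empty, iff_false, not_not] at this
    exact this

lemma ZTensor_eq (ε : ℝ) (S : Finset (Fin (n+1))) : ZTensor ε S = Pm ε ∅ S := by
  ext x y
  rw [ZTensor, Pm]
  refine if_congr ?_ rfl rfl
  constructor
  · rintro rfl; simp
  · intro h; funext j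
    have := h j
    simp only [Finset.notMem_empty, iff_false, not_not] at this
    exact this

lemma XTensor_eq (ε : ℝ) (T : Finset (Fin (n+1))) : XTensor ε T = Pm ε T ∅ := by
  ext x y
  rw [XTensor, Pm, Finset.prod_empty, mul_one]

def epsO : Fin 3 → ℝ := ![1, -1, 1]

def EE (i : Fin n) : Finset (Fin (n+1)) := {i.castSucc, i.succ}

def TO (i : Fin n) : Fin 3 → Finset (Fin (n+1)) := ![EE i, EE i, ∅]

def SO (i : Fin n) : Fin 3 → Finset (Fin (n+1)) := ![∅, EE i, EE i]

lemma term_eq (i : Fin n) (j : Fin 3) : term i j = Pm (epsO j) (TO i j) (SO i j) := by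
  fin_cases j <;>
    simp [term, epsO, TO, SO, EE, origXX_eq, origYY_eq, origZZ_eq]

lemma epsO_ne_zero (j : Fin 3) : epsO j ≠ 0 := by
  fin_cases j <;> norm_num [epsO]

-- chi computation helpers

lemma chi_empty_right (T : Finset (Fin (n+1))) : chi T ∅ = 1 := Finset.prod_empty

lemma chi_empty_left (S : Finset (Fin (n+1))) : chi ∅ S = 1 := by
  simp [chi]

lemma chi_singleton (T : Finset (Fin (n+1))) (u : Fin (n+1)) :
    chi T {u} = if u ∈ T then (-1:ℝ) else 1 := Finset.prod_singleton ..

lemma chi_insert {T : Finset (Fin (n+1))} {u : Fin (n+1)} {s : Finset (Fin (n+1))}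
    (h : u ∉ s) : chi T (insert u s) = (if u ∈ T then (-1:ℝ) else 1) * chi T s :=
  Finset.prod_insert h

lemma chi_symmDiff_right (T S S' : Finset (Fin (n+1))) :
    chi T (S ∆ S') = chi T S * chi T S' :=
  prod_symmDiff_of_sq _ (fun i => by split_ifs <;> norm_num) S S'

lemma chi_pair_left {u v : Fin (n+1)} (h : u ≠ v) (S : Finset (Fin (n+1))) :
    chi {u, v} S = chi {u} S * chi {v} S := by
  rw [chi, chi, chi, ← Finset.prod_mul_distrib]
  refine Finset.prod_congr rfl fun i _ => ?_
  by_cases h1 : i = u <;> by_cases h2 : i = v <;>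
    simp [h1, h2, Finset.mem_insert, Finset.mem_singleton] <;> simp_all

lemma chi_pair_right (T : Finset (Fin (n+1))) {u v : Fin (n+1)} (h : u ≠ v) :
    chi T {u, v} = (if u ∈ T then (-1:ℝ) else 1) * (if v ∈ T then (-1:ℝ) else 1) :=
  Finset.prod_pair h

lemma chi_one_of_disjoint {T S : Finset (Fin (n+1))} (h : ∀ s ∈ S, s ∉ T) :
    chi T S = 1 :=
  Finset.prod_eq_one fun i hi => if_neg (h i hi)

end Aux2

section Aux3
variable {n : ℕ}

lemma chi_EE_adj {i i' : Fin n} (h : (i':ℕ) = (i:ℕ) + 1 ∨ (i:ℕ) = (i':ℕ) + 1) :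
    chi (EE i) (EE i') = -1 := by
  rw [show EE i' = {i'.castSucc, i'.succ} from rfl, chi_pair_right _ (castSucc_ne_succ i')]
  simp only [EE, Finset.mem_insert, Finset.mem_singleton, Fin.ext_iff,
    Fin.coe_castSucc, Fin.val_succ]
  rcases h with h | h
  · rw [if_pos (by omega), if_neg (by omega)]; ring
  · rw [if_neg (by omega), if_pos (by omega)]; ring

lemma chi_EE_same (i : Fin n) : chi (EE i) (EE i) = 1 := by
  rw [show EE i = {i.castSucc, i.succ} from rfl, chi_pair_right _ (castSucc_ne_succ i)]
  simp

lemma chi_EE_far {i i' : Fin n} (h : ¬((i':ℕ) = (i:ℕ) + 1 ∨ (i:ℕ) = (i':ℕ) + 1))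
    (hne : (i:ℕ) ≠ (i':ℕ)) : chi (EE i) (EE i') = 1 := by
  rw [show EE i' = {i'.castSucc, i'.succ} from rfl, chi_pair_right _ (castSucc_ne_succ i')]
  simp only [EE, Finset.mem_insert, Finset.mem_singleton, Fin.ext_iff,
    Fin.coe_castSucc, Fin.val_succ]
  rw [if_neg (by omega), if_neg (by omega)]; ring

lemma orig_chi_nonadj {i i' : Fin n} (h : ¬((i':ℕ) = (i:ℕ) + 1 ∨ (i:ℕ) = (i':ℕ) + 1))
    (j j' : Fin 3) : chi (TO i j) (SO i' j') = 1 := by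
  by_cases hne : (i:ℕ) = (i':ℕ)
  · have heq : i = i' := Fin.ext hne
    subst heq
    fin_cases j <;> fin_cases j' <;>
      simp [TO, SO, chi_empty_left, chi_empty_right, chi_EE_same]
  · fin_cases j <;> fin_cases j' <;>
      simp [TO, SO, chi_empty_left, chi_empty_right, chi_EE_far h hne]

lemma orig_chi_adj_diag {i i' : Fin n} (h : (i':ℕ) = (i:ℕ) + 1 ∨ (i:ℕ) = (i':ℕ) + 1)
    (j : Fin 3) : chi (TO i j) (SO i' j) = chi (TO i' j) (SO i j) := by
  have h1 : chi (EE i) (EE i') = -1 := chi_EE_adj h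
  have h2 : chi (EE i') (EE i) = -1 := chi_EE_adj (by omega)
  fin_cases j <;> simp [TO, SO, chi_empty_left, chi_empty_right, h1, h2]

lemma orig_chi_adj_off {i i' : Fin n} (h : (i':ℕ) = (i:ℕ) + 1 ∨ (i:ℕ) = (i':ℕ) + 1)
    {j j' : Fin 3} (hjj : j ≠ j') : chi (TO i j) (SO i' j') = -chi (TO i' j') (SO i j) := by
  have h1 : chi (EE i) (EE i') = -1 := chi_EE_adj h
  have h2 : chi (EE i') (EE i) = -1 := chi_EE_adj (by omega)
  fin_cases j <;> fin_cases j' <;>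
    simp_all [TO, SO, chi_empty_left, chi_empty_right, h1, h2]

end Aux3

section Aux4
variable {n : ℕ}

noncomputable def eps1 (a b c : ℝ) : ℝ :=
  if 0 < b then -1 else if b < 0 then 1
  else if 0 ≤ c * (if 0 < a then -1 else 1) then 1 else -1

noncomputable def eps0 (a b c : ℝ) : ℝ :=
  if 0 < a then -1 else if a < 0 then 1 else if 0 ≤ c * eps1 a b c then 1 else -1

noncomputable def eps2 (a b c : ℝ) : ℝ := -(eps0 a b c * eps1 a b c)

lemma eps1_pm (a b c : ℝ) : eps1 a b c = 1 ∨ eps1 a b c = -1 := by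
  unfold eps1; split_ifs <;> simp

lemma eps0_pm (a b c : ℝ) : eps0 a b c = 1 ∨ eps0 a b c = -1 := by
  unfold eps0; split_ifs <;> simp

lemma eps2_pm (a b c : ℝ) : eps2 a b c = 1 ∨ eps2 a b c = -1 := by
  rcases eps0_pm a b c with h0 | h0 <;> rcases eps1_pm a b c with h1 | h1 <;>
    simp [eps2, h0, h1]

lemma eps0_ne_zero (a b c : ℝ) : eps0 a b c ≠ 0 := by
  rcases eps0_pm a b c with h | h <;> rw [h] <;> norm_num

lemma eps1_ne_zero (a b c : ℝ) : eps1 a b c ≠ 0 := by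
  rcases eps1_pm a b c with h | h <;> rw [h] <;> norm_num

lemma eps2_ne_zero (a b c : ℝ) : eps2 a b c ≠ 0 := by
  rcases eps2_pm a b c with h | h <;> rw [h] <;> norm_num

lemma a_eps0 (a b c : ℝ) : a * eps0 a b c ≤ 0 := by
  unfold eps0; split_ifs <;> nlinarith

lemma b_eps1 (a b c : ℝ) : b * eps1 a b c ≤ 0 := by
  unfold eps1; split_ifs <;> nlinarith

lemma c_eps2 (a b c : ℝ) (h : 0 ≤ a * b * c) : c * eps2 a b c ≤ 0 := by
  rcases lt_trichotomy 0 a with ha | ha | ha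
  · have h0 : eps0 a b c = -1 := by rw [eps0, if_pos ha]
    rcases lt_trichotomy 0 b with hb | hb | hb
    · have h1 : eps1 a b c = -1 := by rw [eps1, if_pos hb]
      rw [eps2, h0, h1]
      nlinarith [mul_pos ha hb]
    · have hb1 : ¬ 0 < b := by rw [← hb]; exact lt_irrefl 0
      have hb2 : ¬ b < 0 := by rw [← hb]; exact lt_irrefl 0
      by_cases hc : 0 ≤ c * (if 0 < a then (-1:ℝ) else 1)
      · have h1 : eps1 a b c = 1 := by rw [eps1, if_neg hb1, if_neg hb2, if_pos hc]
        rw [if_pos ha] at hc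
        rw [eps2, h0, h1]; nlinarith
      · have h1 : eps1 a b c = -1 := by rw [eps1, if_neg hb1, if_neg hb2, if_neg hc]
        rw [if_pos ha] at hc; push_neg at hc
        rw [eps2, h0, h1]; nlinarith
    · have h1 : eps1 a b c = 1 := by rw [eps1, if_neg (by linarith), if_pos hb]
      rw [eps2, h0, h1]
      nlinarith [mul_neg_of_pos_of_neg ha hb]
  · -- a = 0 : eps0 chosen so that 0 ≤ c * eps0 * eps1
    have ha1 : ¬ 0 < a := by rw [← ha]; exact lt_irrefl 0
    have ha2 : ¬ a < 0 := by rw [← ha]; exact lt_irrefl 0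
    by_cases hc : 0 ≤ c * eps1 a b c
    · have h0 : eps0 a b c = 1 := by rw [eps0, if_neg ha1, if_neg ha2, if_pos hc]
      rw [eps2, h0]; nlinarith
    · have h0 : eps0 a b c = -1 := by rw [eps0, if_neg ha1, if_neg ha2, if_neg hc]
      push_neg at hc
      rw [eps2, h0]; nlinarith
  · have h0 : eps0 a b c = 1 := by rw [eps0, if_neg (by linarith), if_pos ha]
    rcases lt_trichotomy 0 b with hb | hb | hb
    · have h1 : eps1 a b c = -1 := by rw [eps1, if_pos hb]
      rw [eps2, h0, h1]
      nlinarith [mul_neg_of_neg_of_pos ha hb]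
    · have hb1 : ¬ 0 < b := by rw [← hb]; exact lt_irrefl 0
      have hb2 : ¬ b < 0 := by rw [← hb]; exact lt_irrefl 0
      by_cases hc : 0 ≤ c * (if 0 < a then (-1:ℝ) else 1)
      · have h1 : eps1 a b c = 1 := by rw [eps1, if_neg hb1, if_neg hb2, if_pos hc]
        rw [if_neg (by linarith)] at hc
        rw [eps2, h0, h1]; nlinarith
      · have h1 : eps1 a b c = -1 := by rw [eps1, if_neg hb1, if_neg hb2, if_neg hc]
        rw [if_neg (by linarith)] at hc; push_neg at hc
        rw [eps2, h0, h1]; nlinarith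
    · have h1 : eps1 a b c = 1 := by rw [eps1, if_neg (by linarith), if_pos hb]
      rw [eps2, h0, h1]
      nlinarith [mul_pos_of_neg_of_neg ha hb]

-- image sets

def TX (i : Fin n) : Fin 3 → Finset (Fin (n+1)) :=
  ![{i.castSucc}, {i.succ}, {i.castSucc, i.succ}]

def ZA (i : Fin n) : Finset (Fin (n+1)) :=
  insert i.castSucc (if h : (i:ℕ)+2 ≤ n then {(⟨(i:ℕ)+2, by omega⟩ : Fin (n+1))} else ∅)

def ZB (i : Fin n) : Finset (Fin (n+1)) :=
  insert i.succ (if h : 1 ≤ (i:ℕ) then {(⟨(i:ℕ)-1, by omega⟩ : Fin (n+1))} else ∅)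

def SZ (i : Fin n) : Fin 3 → Finset (Fin (n+1)) := ![ZA i, ZB i, ZA i ∆ ZB i]

lemma chi_c_ZA {i k : Fin n} (h : (k:ℕ) = (i:ℕ) + 1 ∨ (i:ℕ) = (k:ℕ) + 1) :
    chi {i.castSucc} (ZA k) = 1 := by
  rw [ZA]
  by_cases hd : (k:ℕ)+2 ≤ n
  · rw [dif_pos hd, chi_insert (by simp only [Finset.mem_singleton, Fin.ext_iff, Fin.coe_castSucc, Fin.val_succ]; omega), chi_singleton,
      if_neg (by simp only [Finset.mem_singleton, Fin.ext_iff, Fin.coe_castSucc, Fin.val_succ]; omega), if_neg (by simp only [Finset.mem_singleton, Fin.ext_iff, Fin.coe_castSucc, Fin.val_succ]; omega)]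
    norm_num
  · rw [dif_neg hd, chi_insert (Finset.notMem_empty _), chi_empty_right,
      if_neg (by simp only [Finset.mem_singleton, Fin.ext_iff, Fin.coe_castSucc, Fin.val_succ]; omega)]
    norm_num

lemma chi_c_ZB {i k : Fin n} (h : (k:ℕ) = (i:ℕ) + 1 ∨ (i:ℕ) = (k:ℕ) + 1) :
    chi {i.castSucc} (ZB k) = -1 := by
  rw [ZB]
  rcases h with h | h
  · -- k = i + 1, so k - 1 = i is in ZB and in {i.castSucc}
    rw [dif_pos (by omega), chi_insert (by simp only [Finset.mem_singleton, Fin.ext_iff, Fin.coe_castSucc, Fin.val_succ]; omega), chi_singleton,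
      if_neg (by simp only [Finset.mem_singleton, Fin.ext_iff, Fin.coe_castSucc, Fin.val_succ]; omega), if_pos (by simp only [Finset.mem_singleton, Fin.ext_iff, Fin.coe_castSucc, Fin.val_succ]; omega)]
    norm_num
  · -- i = k + 1, so k.succ has value i
    by_cases hd : 1 ≤ (k:ℕ)
    · rw [dif_pos hd, chi_insert (by simp only [Finset.mem_singleton, Fin.ext_iff, Fin.coe_castSucc, Fin.val_succ]; omega), chi_singleton,
        if_pos (by simp only [Finset.mem_singleton, Fin.ext_iff, Fin.coe_castSucc, Fin.val_succ]; omega), if_neg (by simp only [Finset.mem_singleton, Fin.ext_iff, Fin.coe_castSucc, Fin.val_succ]; omega)]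
      norm_num
    · rw [dif_neg hd, chi_insert (Finset.notMem_empty _), chi_empty_right,
        if_pos (by simp only [Finset.mem_singleton, Fin.ext_iff, Fin.coe_castSucc, Fin.val_succ]; omega)]
      norm_num

lemma chi_s_ZA {i k : Fin n} (h : (k:ℕ) = (i:ℕ) + 1 ∨ (i:ℕ) = (k:ℕ) + 1) :
    chi {i.succ} (ZA k) = -1 := by
  rw [ZA]
  rcases h with h | h
  · -- k = i+1 : k.castSucc has value i+1 ∈ {i.succ}
    by_cases hd : (k:ℕ)+2 ≤ n
    · rw [dif_pos hd, chi_insert (by simp only [Finset.mem_singleton, Fin.ext_iff, Fin.coe_castSucc, Fin.val_succ]; omega), chi_singleton,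
        if_pos (by simp only [Finset.mem_singleton, Fin.ext_iff, Fin.coe_castSucc, Fin.val_succ]; omega), if_neg (by simp only [Finset.mem_singleton, Fin.ext_iff, Fin.coe_castSucc, Fin.val_succ]; omega)]
      norm_num
    · rw [dif_neg hd, chi_insert (Finset.notMem_empty _), chi_empty_right,
        if_pos (by simp only [Finset.mem_singleton, Fin.ext_iff, Fin.coe_castSucc, Fin.val_succ]; omega)]
      norm_num
  · -- i = k+1 : k+2 = i+1 present since i < n
    have hd : (k:ℕ)+2 ≤ n := by have := i.isLt; omega
    rw [dif_pos hd, chi_insert (by simp only [Finset.mem_singleton, Fin.ext_iff, Fin.coe_castSucc, Fin.val_succ]; omega), chi_singleton,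
      if_neg (by simp only [Finset.mem_singleton, Fin.ext_iff, Fin.coe_castSucc, Fin.val_succ]; omega), if_pos (by simp only [Finset.mem_singleton, Fin.ext_iff, Fin.coe_castSucc, Fin.val_succ]; omega)]
    norm_num

lemma chi_s_ZB {i k : Fin n} (h : (k:ℕ) = (i:ℕ) + 1 ∨ (i:ℕ) = (k:ℕ) + 1) :
    chi {i.succ} (ZB k) = 1 := by
  rw [ZB]
  by_cases hd : 1 ≤ (k:ℕ)
  · rw [dif_pos hd, chi_insert (by simp only [Finset.mem_singleton, Fin.ext_iff, Fin.coe_castSucc, Fin.val_succ]; omega), chi_singleton,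
      if_neg (by simp only [Finset.mem_singleton, Fin.ext_iff, Fin.coe_castSucc, Fin.val_succ]; omega), if_neg (by simp only [Finset.mem_singleton, Fin.ext_iff, Fin.coe_castSucc, Fin.val_succ]; omega)]
    norm_num
  · rw [dif_neg hd, chi_insert (Finset.notMem_empty _), chi_empty_right,
      if_neg (by simp only [Finset.mem_singleton, Fin.ext_iff, Fin.coe_castSucc, Fin.val_succ]; omega)]
    norm_num

lemma chi_TX_SZ {i k : Fin n} (h : (k:ℕ) = (i:ℕ) + 1 ∨ (i:ℕ) = (k:ℕ) + 1) (j j' : Fin 3) :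
    chi (TX i j) (SZ k j') = if j = j' then 1 else -1 := by
  have h0a := chi_c_ZA h; have h0b := chi_c_ZB h
  have h1a := chi_s_ZA h; have h1b := chi_s_ZB h
  fin_cases j <;> fin_cases j' <;>
    simp [TX, SZ, chi_symmDiff_right, chi_pair_left (castSucc_ne_succ i),
      h0a, h0b, h1a, h1b]

lemma mem_ZA {k : Fin n} {s : Fin (n+1)} (hs : s ∈ ZA k) :
    (s:ℕ) = (k:ℕ) ∨ (s:ℕ) = (k:ℕ)+2 := by
  rw [ZA] at hs
  by_cases hd : (k:ℕ)+2 ≤ n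
  · rw [dif_pos hd] at hs
    rcases Finset.mem_insert.1 hs with h | h
    · left; rw [h]; rfl
    · right; rw [Finset.mem_singleton.1 h]
  · rw [dif_neg hd] at hs
    rcases Finset.mem_insert.1 hs with h | h
    · left; rw [h]; rfl
    · exact absurd h (Finset.notMem_empty _)

lemma mem_ZB {k : Fin n} {s : Fin (n+1)} (hs : s ∈ ZB k) :
    (s:ℕ) = (k:ℕ)+1 ∨ (s:ℕ) = (k:ℕ)-1 := by
  rw [ZB] at hs
  by_cases hd : 1 ≤ (k:ℕ)
  · rw [dif_pos hd] at hs
    rcases Finset.mem_insert.1 hs with h | h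
    · left; rw [h]; rfl
    · right; rw [Finset.mem_singleton.1 h]
  · rw [dif_neg hd] at hs
    rcases Finset.mem_insert.1 hs with h | h
    · left; rw [h]; rfl
    · exact absurd h (Finset.notMem_empty _)

lemma mem_SZ {k : Fin n} {j' : Fin 3} {s : Fin (n+1)} (hs : s ∈ SZ k j') :
    (k:ℕ)-1 ≤ (s:ℕ) ∧ (s:ℕ) ≤ (k:ℕ)+2 := by
  fin_cases j' <;> simp only [SZ] at hs
  · rcases mem_ZA hs with h | h <;> omega
  · rcases mem_ZB hs with h | h <;> omega
  · rcases Finset.mem_symmDiff.1 (show s ∈ ZA k ∆ ZB k from hs) with ⟨h, -⟩ | ⟨h, -⟩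
    · rcases mem_ZA h with h | h <;> omega
    · rcases mem_ZB h with h | h <;> omega

lemma mem_TX {i : Fin n} {j : Fin 3} {s : Fin (n+1)} (hs : s ∈ TX i j) :
    (s:ℕ) = (i:ℕ) ∨ (s:ℕ) = (i:ℕ)+1 := by
  fin_cases j
  · have h' : s = i.castSucc := Finset.mem_singleton.1 hs
    left; rw [h']; rfl
  · have h' : s = i.succ := Finset.mem_singleton.1 hs
    right; rw [h']; rfl
  · rcases Finset.mem_insert.1 (show s ∈ ({i.castSucc, i.succ} : Finset (Fin (n+1))) from hs)
      with h' | h'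
    · left; rw [h']; rfl
    · right; rw [Finset.mem_singleton.1 h']; rfl

lemma chi_TX_SZ_far {i k : Fin n} (h : (k:ℕ)+2 < (i:ℕ) ∨ (i:ℕ)+2 < (k:ℕ))
    (j j' : Fin 3) : chi (TX i j) (SZ k j') = 1 :=
  chi_one_of_disjoint fun s hs ht => by
    have h1 := mem_SZ hs
    have h2 := mem_TX ht
    omega

end Aux4

section Aux5
variable {n : ℕ}

noncomputable def epsXv (a b c : ℝ) : Fin 3 → ℝ := ![eps0 a b c, eps1 a b c, eps2 a b c]

noncomputable def epsZv : Fin 3 → ℝ := ![1, 1, -1]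

noncomputable def phi (p : ℕ) (a b c : Fin n → ℝ) (i : Fin n) (j : Fin 3) :
    Matrix (Qubits n) (Qubits n) ℝ :=
  if (i:ℕ) % 2 = p then XTensor (epsXv (a i) (b i) (c i) j) (TX i j)
  else ZTensor (epsZv j) (SZ i j)

lemma epsXv_pm (a b c : ℝ) (j : Fin 3) : epsXv a b c j = 1 ∨ epsXv a b c j = -1 := by
  fin_cases j
  · exact eps0_pm a b c
  · exact eps1_pm a b c
  · exact eps2_pm a b c

lemma epsXv_ne_zero (a b c : ℝ) (j : Fin 3) : epsXv a b c j ≠ 0 := by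
  rcases epsXv_pm a b c j with h | h <;> rw [h] <;> norm_num

lemma epsZv_pm (j : Fin 3) : epsZv j = 1 ∨ epsZv j = -1 := by
  fin_cases j <;> simp [epsZv]

lemma epsZv_ne_zero (j : Fin 3) : epsZv j ≠ 0 := by
  rcases epsZv_pm j with h | h <;> rw [h] <;> norm_num

lemma card_TX (i : Fin n) (j : Fin 3) : (TX i j).card ≤ 4 := by
  fin_cases j
  · exact le_trans (Finset.card_singleton _).le (by norm_num)
  · exact le_trans (Finset.card_singleton _).le (by norm_num)
  · exact le_trans (Finset.card_insert_le _ _) (by simp)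

lemma card_ZA (i : Fin n) : (ZA i).card ≤ 2 := by
  refine le_trans (Finset.card_insert_le _ _) ?_
  have h1 : (if h : (i:ℕ)+2 ≤ n then
      ({(⟨(i:ℕ)+2, by omega⟩ : Fin (n+1))} : Finset (Fin (n+1))) else ∅).card ≤ 1 := by
    split_ifs <;> simp
  omega

lemma card_ZB (i : Fin n) : (ZB i).card ≤ 2 := by
  refine le_trans (Finset.card_insert_le _ _) ?_
  have h1 : (if h : 1 ≤ (i:ℕ) then
      ({(⟨(i:ℕ)-1, by omega⟩ : Fin (n+1))} : Finset (Fin (n+1))) else ∅).card ≤ 1 := by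
    split_ifs <;> simp
  omega

lemma card_SZ (i : Fin n) (j : Fin 3) : (SZ i j).card ≤ 4 := by
  have hA := card_ZA i; have hB := card_ZB i
  fin_cases j
  · exact le_trans hA (by norm_num)
  · exact le_trans hB (by norm_num)
  · have hsub : ZA i ∆ ZB i ⊆ ZA i ∪ ZB i := fun x hx => by
      rcases Finset.mem_symmDiff.1 hx with ⟨h1, -⟩ | ⟨h1, -⟩
      exacts [Finset.mem_union_left _ h1, Finset.mem_union_right _ h1]
    have h1 : (ZA i ∆ ZB i).card ≤ (ZA i ∪ ZB i).card := Finset.card_le_card hsub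
    have h2 : (ZA i ∪ ZB i).card ≤ (ZA i).card + (ZB i).card := Finset.card_union_le _ _
    exact le_trans h1 (le_trans h2 (by omega))

variable {p : ℕ} {a b c : Fin n → ℝ} {i : Fin n}

lemma phi_hyp (hp : (i:ℕ) % 2 = p) (j : Fin 3) :
    phi p a b c i j = Pm (epsXv (a i) (b i) (c i) j) (TX i j) ∅ := by
  rw [phi, if_pos hp, XTensor_eq]

lemma phi_comp (hp : ¬ (i:ℕ) % 2 = p) (j : Fin 3) :
    phi p a b c i j = Pm (epsZv j) ∅ (SZ i j) := by
  rw [phi, if_neg hp, ZTensor_eq]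

end Aux5

section Main
variable {n : ℕ}

lemma singleton_symmDiff {u v : Fin (n+1)} (h : u ≠ v) :
    ({u} : Finset (Fin (n+1))) ∆ {v} = {u, v} := by
  rw [Disjoint.symmDiff_eq_sup (Finset.disjoint_singleton.2 h), Finset.sup_eq_union]
  exact (Finset.insert_eq u {v}).symm

lemma empty_symmDiff : (∅ : Finset (Fin (n+1))) ∆ ∅ = ∅ := by
  rw [symmDiff_self]; rfl

theorem main (p : ℕ) (hp2 : p < 2) (a b c : Fin n → ℝ)
    (h : ∀ i : Fin n, (i : ℕ) % 2 = p → 0 ≤ a i * b i * c i) :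
    ∃ φ : Fin n → Fin 3 → Matrix (Qubits n) (Qubits n) ℝ,
      (∀ i j, (∃ ε S, (ε = (1 : ℝ) ∨ ε = -1) ∧ S.card ≤ 4 ∧ φ i j = ZTensor ε S) ∨
              (∃ ε S, (ε = (1 : ℝ) ∨ ε = -1) ∧ S.card ≤ 4 ∧ φ i j = XTensor ε S)) ∧
      (∀ i j i' j', Commute (term i j) (term i' j') → Commute (φ i j) (φ i' j')) ∧
      (∀ i j i' j', term i j * term i' j' = -(term i' j' * term i j) →
        φ i j * φ i' j' = -(φ i' j' * φ i j)) ∧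
      (∀ i, φ i 0 * φ i 1 = -(φ i 2)) ∧
      (∀ i j, ∀ x y : Qubits n, x ≠ y → (![a i, b i, c i] j) * φ i j x y ≤ 0) := by
  refine ⟨phi p a b c, ?_, ?_, ?_, ?_, ?_⟩
  · -- form condition
    intro i j
    by_cases hp : (i:ℕ) % 2 = p
    · exact Or.inr ⟨epsXv (a i) (b i) (c i) j, TX i j, epsXv_pm _ _ _ j, card_TX i j,
        by rw [phi, if_pos hp]⟩
    · exact Or.inl ⟨epsZv j, SZ i j, epsZv_pm j, card_SZ i j, by rw [phi, if_neg hp]⟩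
  · -- commutation preservation
    intro i j i' j' hcomm
    rw [commute_iff_eq] at hcomm ⊢
    by_cases h1 : (i:ℕ) % 2 = p <;> by_cases h2 : (i':ℕ) % 2 = p
    · rw [phi_hyp h1, phi_hyp h2]
      exact commute_of_chi (by rw [chi_empty_right, chi_empty_right])
    · -- i hypothesis edge (X-type), i' complementary (Z-type)
      by_cases hadj : (i':ℕ) = (i:ℕ) + 1 ∨ (i:ℕ) = (i':ℕ) + 1
      · by_cases hjj : j = j'
        · subst hjj
          rw [phi_hyp h1, phi_comp h2]
          exact commute_of_chi
            (by rw [chi_TX_SZ hadj, if_pos rfl, chi_empty_left])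
        · exfalso
          rw [term_eq, term_eq] at hcomm
          exact not_commute (orig_chi_adj_off hadj hjj)
            (epsO_ne_zero j) (epsO_ne_zero j') hcomm
      · rw [phi_hyp h1, phi_comp h2]
        have hfar : (i':ℕ) + 2 < (i:ℕ) ∨ (i:ℕ) + 2 < (i':ℕ) := by omega
        exact commute_of_chi (by rw [chi_TX_SZ_far hfar, chi_empty_left])
    · -- i complementary, i' hypothesis
      by_cases hadj : (i':ℕ) = (i:ℕ) + 1 ∨ (i:ℕ) = (i':ℕ) + 1
      · by_cases hjj : j = j'
        · subst hjj
          rw [phi_comp h1, phi_hyp h2]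
          exact commute_of_chi
            (by rw [chi_empty_left, chi_TX_SZ (by omega : (i:ℕ) = (i':ℕ)+1 ∨ (i':ℕ) = (i:ℕ)+1),
              if_pos rfl])
        · exfalso
          rw [term_eq, term_eq] at hcomm
          exact not_commute (orig_chi_adj_off hadj hjj)
            (epsO_ne_zero j) (epsO_ne_zero j') hcomm
      · rw [phi_comp h1, phi_hyp h2]
        have hfar : (i:ℕ) + 2 < (i':ℕ) ∨ (i':ℕ) + 2 < (i:ℕ) := by omega
        exact commute_of_chi (by rw [chi_empty_left, chi_TX_SZ_far hfar])
    · rw [phi_comp h1, phi_comp h2]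
      exact commute_of_chi (by rw [chi_empty_left, chi_empty_left])
  · -- anticommutation preservation
    intro i j i' j' hanti
    by_cases hadj : (i':ℕ) = (i:ℕ) + 1 ∨ (i:ℕ) = (i':ℕ) + 1
    · by_cases hjj : j = j'
      · exfalso
        subst hjj
        rw [term_eq, term_eq] at hanti
        exact not_anticommute (orig_chi_adj_diag hadj j)
          (epsO_ne_zero j) (epsO_ne_zero j) hanti
      · -- adjacent, different Paulis: images must anticommute
        by_cases h1 : (i:ℕ) % 2 = p
        · have h2 : ¬ (i':ℕ) % 2 = p := by omega
          rw [phi_hyp h1, phi_comp h2]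
          refine anticommute_of_chi ?_
          rw [chi_TX_SZ hadj, if_neg hjj, chi_empty_left]
        · by_cases h2 : (i':ℕ) % 2 = p
          · rw [phi_comp h1, phi_hyp h2]
            refine anticommute_of_chi ?_
            rw [chi_empty_left,
              chi_TX_SZ (by omega : (i:ℕ) = (i':ℕ)+1 ∨ (i':ℕ) = (i:ℕ)+1), if_neg (Ne.symm hjj)]
            norm_num
          · -- adjacency forces different parities, so one of i, i' has parity p
            exfalso
            omega
    · exfalso
      rw [term_eq, term_eq] at hanti
      have hadj' : ¬ ((i:ℕ) = (i':ℕ) + 1 ∨ (i':ℕ) = (i:ℕ) + 1) := by omega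
      exact not_anticommute
        (by rw [orig_chi_nonadj hadj, orig_chi_nonadj hadj'])
        (epsO_ne_zero j) (epsO_ne_zero j') hanti
  · -- product relation on each edge
    intro i
    by_cases hp : (i:ℕ) % 2 = p
    · rw [phi_hyp hp 0, phi_hyp hp 1, phi_hyp hp 2, Pm_mul, Pm_neg]
      rw [show TX i 0 = {i.castSucc} from rfl, show TX i 1 = {i.succ} from rfl,
        show TX i 2 = {i.castSucc, i.succ} from rfl,
        singleton_symmDiff (castSucc_ne_succ i), empty_symmDiff, chi_empty_right]
      rw [show epsXv (a i) (b i) (c i) 0 = eps0 (a i) (b i) (c i) from rfl,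
        show epsXv (a i) (b i) (c i) 1 = eps1 (a i) (b i) (c i) from rfl,
        show epsXv (a i) (b i) (c i) 2 = eps2 (a i) (b i) (c i) from rfl, eps2]
      rw [neg_neg, mul_one]
    · rw [phi_comp hp 0, phi_comp hp 1, phi_comp hp 2, Pm_mul, Pm_neg]
      rw [show SZ i 0 = ZA i from rfl, show SZ i 1 = ZB i from rfl,
        show SZ i 2 = ZA i ∆ ZB i from rfl, empty_symmDiff, chi_empty_left]
      rw [show epsZv 0 = (1:ℝ) from rfl, show epsZv 1 = (1:ℝ) from rfl,
        show epsZv 2 = (-1:ℝ) from rfl]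
      norm_num
  · -- off-diagonal sign condition
    intro i j x y hxy
    by_cases hp : (i:ℕ) % 2 = p
    · rw [phi, if_pos hp]
      show (![a i, b i, c i] j) * (if (∀ j', (x j' ≠ y j') ↔ j' ∈ TX i j)
        then epsXv (a i) (b i) (c i) j else 0) ≤ 0
      split_ifs with hc
      · fin_cases j
        · exact a_eps0 (a i) (b i) (c i)
        · exact b_eps1 (a i) (b i) (c i)
        · exact c_eps2 (a i) (b i) (c i) (h i hp)
      · rw [mul_zero]
    · rw [phi, if_neg hp]
      show (![a i, b i, c i] j) * (if x = y then _ else 0) ≤ 0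
      rw [if_neg hxy, mul_zero]

end Main


/-- Clifford sign-curing of the disordered 1D XYZ chain
`H = Σᵢ aᵢ XᵢXᵢ₊₁ + bᵢ YᵢYᵢ₊₁ + cᵢ ZᵢZᵢ₊₁`: if the triple products `aᵢbᵢcᵢ` are
nonnegative on all even edges (or on all odd edges), then there is an assignment of
signed real Pauli operators — tensor products of `Z`'s or of `X`'s on at most 4
qubits — preserving all pairwise commutation/anticommutation relations and the
product relation `(XX)(YY) = −(ZZ)` on each edge, such that every weighted image
term has all off-diagonal entries `≤ 0`; hence the transformed Hamiltonian is
4-termwise stoquastic. -/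
theorem xyz_clifford_sign_curing {n : ℕ} (a b c : Fin n → ℝ)
    (hcond : (∀ i : Fin n, (i : ℕ) % 2 = 0 → 0 ≤ a i * b i * c i) ∨
             (∀ i : Fin n, (i : ℕ) % 2 = 1 → 0 ≤ a i * b i * c i)) :
    ∃ φ : Fin n → Fin 3 → Matrix (Qubits n) (Qubits n) ℝ,
      (∀ i j, (∃ ε S, (ε = (1 : ℝ) ∨ ε = -1) ∧ S.card ≤ 4 ∧ φ i j = ZTensor ε S) ∨
              (∃ ε S, (ε = (1 : ℝ) ∨ ε = -1) ∧ S.card ≤ 4 ∧ φ i j = XTensor ε S)) ∧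
      (∀ i j i' j', Commute (term i j) (term i' j') → Commute (φ i j) (φ i' j')) ∧
      (∀ i j i' j', term i j * term i' j' = -(term i' j' * term i j) →
        φ i j * φ i' j' = -(φ i' j' * φ i j)) ∧
      (∀ i, φ i 0 * φ i 1 = -(φ i 2)) ∧
      (∀ i j, ∀ x y : Qubits n, x ≠ y → (![a i, b i, c i] j) * φ i j x y ≤ 0) := by
  rcases hcond with h | h
  · exact main 0 (by norm_num) a b c h
  · exact main 1 (by norm_num) a b c h

end Stmt18
end

section
/- In the translationally invariant 1D XYZ model, all closed-path weights in the path-integral expansion are nonnegative: for H = Σᵢ (α XᵢXᵢ₊₁ + β YᵢYᵢ₊₁ + γ ZᵢZᵢ₊₁), any closed sequence of bitstrings x₁, x₂, …, x_N, x_{N+1} = x₁ in which each consecutive pair differs by the action of a single off-diagonal term (a single application of α XᵢXᵢ₊₁ + β YᵢYᵢ₊₁ on some adjacent pair) has product of matrix elements Π_i ⟨x_{i+1}|α XX + β YY|x_i⟩ = (α−β)^{m₁}(α+β)^{m₂} with m₁ (the number of applications to an aligned pair 00 or 11) and m₂ (applications to an anti-aligned pair 01 or 10) both even; hence the product is ≥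 0. -/
open Finset

/-!
Every step flips the two bits of an adjacent pair. Flipping an aligned pair changes the Hamming
weight by `±2`, flipping an anti-aligned pair leaves it unchanged, so the Hamming weight mod 4
moves by `2` exactly at the aligned steps; along a closed path this forces `m₁` to be even.
Of two adjacent sites exactly one is even, so every step changes the parity of the number of
`1`s on even sites; along a closed path this forces the length `N = m₁ + m₂` to be even.
-/

lemma Fin.sum_univ_succ_sub_castSucc {G : Type*} [AddCommGroup G] {N : ℕ}
    (f : Fin (N + 1) → G) : ∑ i : Fin N, (f i.succ - f i.castSucc) = f (Fin.last N) - f 0 := by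
  induction N with
  | zero => simp
  | succ N ih =>
    rw [Fin.sum_univ_castSucc, Fin.succ_last]
    simp only [Fin.succ_castSucc]
    rw [ih (fun i => f i.castSucc), Fin.castSucc_zero]
    abel

lemma Fin.sum_succ_sub_castSucc_comp_eq_zero {α G : Type*} [AddCommGroup G] {N : ℕ}
    {x : Fin (N + 1) → α} (hclosed : x (Fin.last N) = x 0) (Φ : α → G) :
    ∑ k : Fin N, (Φ (x k.succ) - Φ (x k.castSucc)) = 0 := by
  rw [Fin.sum_univ_succ_sub_castSucc (fun i => Φ (x i)), hclosed, sub_self]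

section PairFlip

variable {ι : Type*} [Fintype ι] {x y : ι → Bool} {a b : ι}

lemma sum_sub_sum_of_flip_pair {G : Type*} [AddCommGroup G] (hab : a ≠ b)
    (hxy : ∀ j, x j ≠ y j ↔ j = a ∨ j = b) (c : ι → Bool → G) :
    ∑ j, c j (y j) - ∑ j, c j (x j) = (c a (!x a) - c a (x a)) + (c b (!x b) - c b (x b)) := by
  have hflip : ∀ j, j = a ∨ j = b → y j = !x j := fun j hj =>
    Bool.eq_not_iff.mpr ((hxy j).mpr hj).symm
  rw [← sum_sub_distrib, Fintype.sum_eq_add a b hab, hflip a (.inl rfl), hflip b (.inr rfl)]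
  rintro j ⟨hja, hjb⟩
  rw [not_ne_iff.mp (mt (hxy j).mp (not_or.mpr ⟨hja, hjb⟩)), sub_self]

lemma hammingWeight_zmod4_sub_of_flip_pair (hab : a ≠ b)
    (hxy : ∀ j, x j ≠ y j ↔ j = a ∨ j = b) :
    ∑ j, ((y j).toNat : ZMod 4) - ∑ j, ((x j).toNat : ZMod 4) =
      if (x a == x b) = true then 2 else 0 := by
  rw [sum_sub_sum_of_flip_pair hab hxy fun _ p => (p.toNat : ZMod 4)]
  cases x a <;> cases x b <;> decide

lemma evenSiteWeight_zmod2_sub_of_flip_adjacent {n : ℕ} {x y : Fin n → Bool} {a b : Fin n}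
    (hadj : (b : ℕ) = a + 1) (hxy : ∀ j, x j ≠ y j ↔ j = a ∨ j = b) :
    ∑ j : Fin n, (if Even (j : ℕ) then ((y j).toNat : ZMod 2) else 0) -
      ∑ j : Fin n, (if Even (j : ℕ) then ((x j).toNat : ZMod 2) else 0) = 1 := by
  have hab : a ≠ b := fun h => by rw [h] at hadj; omega
  rw [sum_sub_sum_of_flip_pair hab hxy fun j p => if Even (j : ℕ) then (p.toNat : ZMod 2) else 0,
    hadj]
  by_cases ha : Even (a : ℕ) <;> simp only [ha, Nat.even_add_one, if_true, if_false, not_true,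
    not_false_eq_true] <;> cases x a <;> cases x b <;> decide

end PairFlip

section ClosedPath

variable {N : ℕ}

lemma even_card_filter_aligned {ι : Type*} [Fintype ι] {x : Fin (N + 1) → ι → Bool}
    {a b : Fin N → ι} (hab : ∀ k, a k ≠ b k)
    (hstep : ∀ k j, x k.castSucc j ≠ x k.succ j ↔ j = a k ∨ j = b k)
    (hclosed : x (Fin.last N) = x 0) :
    Even (univ.filter fun k => (x k.castSucc (a k) == x k.castSucc (b k)) = true).card := by
  have hsum := Fin.sum_succ_sub_castSucc_comp_eq_zero hclosed
    fun y => ∑ j, ((y j).toNat : ZMod 4)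
  simp only [hammingWeight_zmod4_sub_of_flip_pair (hab _) (hstep _), sum_ite, sum_const_zero,
    sum_const, add_zero, nsmul_eq_mul] at hsum
  have h4 : 4 ∣ _ * 2 := (ZMod.natCast_eq_zero_iff _ 4).mp (by exact_mod_cast hsum)
  exact Nat.even_iff.mpr (by omega)

lemma even_of_closed_adjacent_flip_path {n : ℕ} {x : Fin (N + 1) → Fin n → Bool}
    {a b : Fin N → Fin n} (hadj : ∀ k, (b k : ℕ) = a k + 1)
    (hstep : ∀ k j, x k.castSucc j ≠ x k.succ j ↔ j = a k ∨ j = b k)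
    (hclosed : x (Fin.last N) = x 0) : Even N := by
  have hsum := Fin.sum_succ_sub_castSucc_comp_eq_zero hclosed
    fun y => ∑ j : Fin n, if Even (j : ℕ) then ((y j).toNat : ZMod 2) else 0
  simp only [evenSiteWeight_zmod2_sub_of_flip_adjacent (hadj _) (hstep _), sum_const, card_univ,
    Fintype.card_fin, nsmul_eq_mul, mul_one] at hsum
  exact ZMod.natCast_eq_zero_iff_even.mp hsum

end ClosedPath

/-- In the translationally invariant 1D XYZ model, all closed-path weights in the
path-integral expansion are nonnegative: for a closed sequence of bitstrings in which
each consecutive pair differs by one application of `α XX + β YY` on an adjacent pair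
of sites, the numbers `m₁` of aligned applications and `m₂` of anti-aligned
applications are both even, and the product of matrix elements equals
`(α−β)^m₁ (α+β)^m₂ ≥ 0`. -/
theorem xyz_closed_path_weights_nonneg (n N : ℕ) (α β : ℝ)
    (x : Fin (N + 1) → Fin n → Bool) (e : Fin N → ℕ) (he : ∀ k, e k + 1 < n)
    (hstep : ∀ k : Fin N, ∀ j : Fin n,
      (x k.castSucc j ≠ x k.succ j) ↔ ((j : ℕ) = e k ∨ (j : ℕ) = e k + 1))
    (hclosed : x (Fin.last N) = x 0) :
    let aligned : Fin N → Bool := fun k =>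
      x k.castSucc ⟨e k, Nat.lt_of_succ_lt (he k)⟩ == x k.castSucc ⟨e k + 1, he k⟩
    let w : Fin N → ℝ := fun k => if aligned k then α - β else α + β
    let m₁ := (Finset.univ.filter fun k => aligned k = true).card
    let m₂ := (Finset.univ.filter fun k => aligned k = false).card
    Even m₁ ∧ Even m₂ ∧ (∏ k, w k) = (α - β) ^ m₁ * (α + β) ^ m₂ ∧ 0 ≤ ∏ k, w k := by
  intro aligned w m₁ m₂
  have hstep' : ∀ k j, x k.castSucc j ≠ x k.succ j ↔
      j = ⟨e k, Nat.lt_of_succ_lt (he k)⟩ ∨ j = ⟨e k + 1, he k⟩ := by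
    simpa only [Fin.ext_iff] using hstep
  have hm₁ : Even m₁ := even_card_filter_aligned (fun k h => by simp at h) hstep' hclosed
  have hN : Even N := even_of_closed_adjacent_flip_path (fun _ => rfl) hstep' hclosed
  have hcard : m₁ + m₂ = N := by
    simpa only [Bool.not_eq_true, card_univ, Fintype.card_fin] using
      card_filter_add_card_filter_not (s := univ) fun k => aligned k = true
  have hm₂ : Even m₂ := (Nat.even_add.mp (hcard ▸ hN)).mp hm₁
  have hprod : ∏ k, w k = (α - β) ^ m₁ * (α + β) ^ m₂ := by
    simp only [w, prod_ite, prod_const, Bool.not_eq_true, m₁, m₂]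
  exact ⟨hm₁, hm₂, hprod, hprod ▸ mul_nonneg (hm₁.pow_nonneg _) (hm₂.pow_nonneg _)⟩
end
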